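/- arXiv:1702.03360 — 4 statements merged into one kernel-verified Lean document; each statement's English description precedes it below -/
import Mathlib

section
/- Let S : (0,∞)ⁿ → ℝ be C¹ and quasi-homogeneous of degree r and type β with all βᵢ ≠ 0. Define the generalized intensive variables p̃ᵢ(q) = (qᵢ)^{(βᵢ - r)/βᵢ} · pᵢ(q), where pᵢ = ∂S/∂qᵢ. Then each p̃ᵢ is quasi-homogeneous of degree 0 and type β: p̃ᵢ(λ^{β₁} q₁, ..., λ^{βₙ} qₙ) = p̃ᵢ(q) for all λ > 0. -/
/-- The generalized intensive variables
`p̃ᵢ(q) = (qᵢ)^((βᵢ - r)/βᵢ) · pᵢ(q)` of a `C¹` quasi-homogeneous function `S`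
of degree `r` and type `β` (all `βᵢ ≠ 0`) are quasi-homogeneous of degree 0:
they are invariant under the scaling `qⱼ ↦ λ^{βⱼ} qⱼ`, `λ > 0`. -/
theorem generalized_intensive_degree_zero {n : ℕ} (S : (Fin n → ℝ) → ℝ) (r : ℝ)
    (β : Fin n → ℝ) (hβ : ∀ i, β i ≠ 0)
    (hS : ContDiff ℝ 1 S)
    (hqh : ∀ l : ℝ, 0 < l → ∀ q : Fin n → ℝ, (∀ i, 0 < q i) →
      S (fun j => l ^ β j * q j) = l ^ r * S q) :
    ∀ l : ℝ, 0 < l → ∀ q : Fin n → ℝ, (∀ i, 0 < q i) → ∀ i : Fin n,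
      (l ^ β i * q i) ^ ((β i - r) / β i) *
          fderiv ℝ S (fun j => l ^ β j * q j) (Pi.single i 1) =
        (q i) ^ ((β i - r) / β i) * fderiv ℝ S q (Pi.single i 1) := by
  intro l hl q hq i
  have hSd : Differentiable ℝ S := hS.differentiable one_ne_zero
  -- the scaling map as a continuous linear map
  set Φ : (Fin n → ℝ) →L[ℝ] (Fin n → ℝ) :=
    ContinuousLinearMap.pi (fun j => (l ^ β j : ℝ) • ContinuousLinearMap.proj j) with hΦdef
  have hΦ : ∀ x : Fin n → ℝ, Φ x = fun j => l ^ β j * x j := by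
    intro x; funext j; simp [hΦdef, smul_eq_mul]
  -- the open positive orthant
  have hU : IsOpen {x : Fin n → ℝ | ∀ i, 0 < x i} := by
    have : {x : Fin n → ℝ | ∀ i, 0 < x i} = Set.univ.pi (fun _ => Set.Ioi (0:ℝ)) := by
      ext x; simp [Set.mem_pi]
    rw [this]
    exact isOpen_set_pi Set.finite_univ (fun i _ => isOpen_Ioi)
  have hqU : {x : Fin n → ℝ | ∀ i, 0 < x i} ∈ nhds q := hU.mem_nhds hq
  have hev : (fun x => S (Φ x)) =ᶠ[nhds q] fun x => l ^ r * S x := by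
    filter_upwards [hqU] with x hx
    rw [hΦ]; exact hqh l hl x hx
  have h1 : fderiv ℝ (fun x => S (Φ x)) q = (fderiv ℝ S (Φ q)).comp Φ := by
    rw [show (fun x => S (Φ x)) = S ∘ Φ from rfl,
      fderiv_comp q (hSd _) Φ.differentiableAt, Φ.fderiv]
  have h2 : fderiv ℝ (fun x => l ^ r * S x) q = l ^ r • fderiv ℝ S q := by
    simp only [← smul_eq_mul]
    exact fderiv_const_smul (hSd q) (l ^ r)
  have heq := Filter.EventuallyEq.fderiv_eq (𝕜 := ℝ) hev
  rw [h1, h2] at heq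
  have key := congrArg (fun T : (Fin n → ℝ) →L[ℝ] ℝ => T (Pi.single i 1)) heq
  simp only [ContinuousLinearMap.comp_apply, ContinuousLinearMap.smul_apply,
    smul_eq_mul] at key
  have hΦsingle : Φ (Pi.single i 1) = Pi.single i (l ^ β i) := by
    rw [hΦ]; funext j
    by_cases hji : j = i
    · subst hji; simp
    · simp [Pi.single_apply, hji]
  rw [hΦsingle] at key
  have hsingle : (Pi.single i (l ^ β i) : Fin n → ℝ) = (l ^ β i) • (Pi.single i 1 : Fin n → ℝ) := by
    funext j
    by_cases hji : j = i
    · subst hji; simp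
    · simp [Pi.single_apply, hji]
  rw [hsingle, ContinuousLinearMap.map_smul, smul_eq_mul, hΦ] at key
  -- key : l ^ β i * fderiv S (Φ q) (single i 1) = l ^ r * fderiv S q (single i 1)
  set D' := fderiv ℝ S (fun j => l ^ β j * q j) (Pi.single i 1)
  set D := fderiv ℝ S q (Pi.single i 1)
  have hlb : (l : ℝ) ^ β i ≠ 0 := (Real.rpow_pos_of_pos hl _).ne'
  have hD' : D' = l ^ (r - β i) * D := by
    rw [Real.rpow_sub hl]
    field_simp
    linear_combination key
  have hc : β i * ((β i - r) / β i) = β i - r := by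
    rw [mul_div_assoc', mul_comm, mul_div_assoc, div_self (hβ i), mul_one]
  have hone : l ^ (β i - r) * l ^ (r - β i) = 1 := by
    rw [← Real.rpow_add hl]; norm_num
  rw [hD', Real.mul_rpow (Real.rpow_pos_of_pos hl _).le (hq i).le,
    ← Real.rpow_mul hl.le, hc]
  linear_combination (q i ^ ((β i - r) / β i) * D) * hone
end

section
/- Let S : (0,∞)ⁿ → ℝ be C² and quasi-homogeneous of degree r and type β with all βᵢ ≠ 0, and let p̃ᵢ(q) = (qᵢ)^{(βᵢ-r)/βᵢ} ∂S/∂qᵢ(q). Then along any differentiable curve q(t), Σᵢ βᵢ (qᵢ(t))^{r/βᵢ} d/dt (p̃ᵢ(q(t))) = 0. -/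
open Real Filter

lemma clm_apply_decomp {n : ℕ} (L : (Fin n → ℝ) →L[ℝ] ℝ) (v : Fin n → ℝ) :
    L v = ∑ i, v i * L (Pi.single i 1) := by
  have h := L.toLinearMap.pi_apply_eq_sum_univ v
  have h2 : ∀ i : Fin n, (fun j => if i = j then (1:ℝ) else 0) = Pi.single i 1 := by
    intro i; funext j; simp [Pi.single_apply, eq_comm]
  calc L v = ∑ i, v i • L.toLinearMap (fun j => if i = j then (1:ℝ) else 0) := h
    _ = ∑ i, v i * L (Pi.single i 1) := by
        refine Finset.sum_congr rfl fun i _ => ?_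
        rw [h2 i, smul_eq_mul]; rfl

lemma euler_aux {n : ℕ} (S : (Fin n → ℝ) → ℝ) (r : ℝ) (β : Fin n → ℝ)
    (hS : Differentiable ℝ S)
    (hqh : ∀ l : ℝ, 0 < l → ∀ q : Fin n → ℝ, (∀ i, 0 < q i) →
      S (fun j => l ^ β j * q j) = l ^ r * S q)
    (q : Fin n → ℝ) (hq : ∀ i, 0 < q i) :
    ∑ i, β i * q i * fderiv ℝ S q (Pi.single i 1) = r * S q := by
  have hF : HasDerivAt (fun l : ℝ => fun j => l ^ β j * q j) (fun j => β j * q j) 1 := by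
    rw [hasDerivAt_pi]
    intro j
    have := (Real.hasDerivAt_rpow_const (x := (1:ℝ)) (p := β j)
      (Or.inl one_ne_zero)).mul_const (q j)
    simpa using this
  have hq1 : (fun j => (1:ℝ) ^ β j * q j) = q := by
    funext j; simp
  have hcomp : HasDerivAt (fun l : ℝ => S (fun j => l ^ β j * q j))
      (fderiv ℝ S q (fun j => β j * q j)) 1 := by
    have h0 := (hS (fun j => (1:ℝ) ^ β j * q j)).hasFDerivAt.comp_hasDerivAt 1 hF
    rw [hq1] at h0
    exact h0
  have hrhs : HasDerivAt (fun l : ℝ => l ^ r * S q) (r * S q) 1 := by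
    have := (Real.hasDerivAt_rpow_const (x := (1:ℝ)) (p := r)
      (Or.inl one_ne_zero)).mul_const (S q)
    simpa using this
  have heq : (fun l : ℝ => S (fun j => l ^ β j * q j)) =ᶠ[nhds 1]
      (fun l : ℝ => l ^ r * S q) := by
    filter_upwards [eventually_gt_nhds (by norm_num : (0:ℝ) < 1)] with l hl
      using hqh l hl q hq
  have h1 : fderiv ℝ S q (fun j => β j * q j) = r * S q :=
    hcomp.unique (hrhs.congr_of_eventuallyEq heq)
  rw [← h1, clm_apply_decomp]

/-- Generalized Gibbs–Duhem identity in terms of the generalized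
intensive variables `p̃ᵢ(q) = (qᵢ)^((βᵢ-r)/βᵢ) ∂S/∂qᵢ(q)`: along any
differentiable curve `γ` in the positive orthant,
`Σᵢ βᵢ (γᵢ(t))^(r/βᵢ) (p̃ᵢ∘γ)'(t) = 0`. -/
theorem generalized_gibbs_duhem_intensive {n : ℕ} (S : (Fin n → ℝ) → ℝ) (r : ℝ)
    (β : Fin n → ℝ) (hβ : ∀ i, β i ≠ 0)
    (hS : ContDiff ℝ 2 S)
    (hqh : ∀ l : ℝ, 0 < l → ∀ q : Fin n → ℝ, (∀ i, 0 < q i) →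
      S (fun j => l ^ β j * q j) = l ^ r * S q)
    (γ : ℝ → Fin n → ℝ) (hγ : Differentiable ℝ γ)
    (hγpos : ∀ t, ∀ i, 0 < γ t i) :
    ∀ t : ℝ,
      ∑ i : Fin n,
        β i * (γ t i) ^ (r / β i) *
          deriv (fun s => (γ s i) ^ ((β i - r) / β i) *
            fderiv ℝ S (γ s) (Pi.single i 1)) t = 0 := by
  intro t
  have hS1 : Differentiable ℝ S := hS.differentiable (by norm_num)
  have hDdiff : Differentiable ℝ (fderiv ℝ S) :=
    (hS.fderiv_right (m := 1) (by norm_num)).differentiable (by norm_num)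
  set g : Fin n → ℝ → ℝ := fun i s => fderiv ℝ S (γ s) (Pi.single i 1) with hg
  have hgoal : ∀ (s : ℝ) (i : Fin n), fderiv ℝ S (γ s) (Pi.single i 1) = g i s :=
    fun s i => rfl
  simp only [hgoal]
  have hgdiff : ∀ i, Differentiable ℝ (g i) := by
    intro i
    exact (((ContinuousLinearMap.apply ℝ ℝ (Pi.single i 1 : Fin n → ℝ)).differentiable).comp
      hDdiff).comp hγ
  have hγc : ∀ i s, HasDerivAt (fun u => γ u i) (deriv γ s i) s := by
    intro i s
    exact (hasDerivAt_pi.1 (hγ s).hasDerivAt) i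
  have hE : ∀ s : ℝ, ∑ i, β i * γ s i * g i s = r * S (γ s) := fun s =>
    euler_aux S r β hS1 hqh (γ s) (hγpos s)
  -- differentiate Euler identity at t
  have hlhs : HasDerivAt (fun s => ∑ i, β i * γ s i * g i s)
      (∑ i, (β i * deriv γ t i * g i t + β i * γ t i * deriv (g i) t)) t := by
    apply HasDerivAt.fun_sum
    intro i _
    exact ((hγc i t).const_mul (β i)).mul ((hgdiff i) t).hasDerivAt
  have hSg : HasDerivAt (fun s => r * S (γ s))
      (r * ∑ i, deriv γ t i * g i t) t := by
    have hc : HasDerivAt (fun s => S (γ s)) (fderiv ℝ S (γ t) (deriv γ t)) t :=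
      (hS1 (γ t)).hasFDerivAt.comp_hasDerivAt t (hγ t).hasDerivAt
    have := hc.const_mul r
    rw [clm_apply_decomp] at this
    exact this
  have hkey : ∑ i, (β i * deriv γ t i * g i t + β i * γ t i * deriv (g i) t)
      = r * ∑ i, deriv γ t i * g i t := by
    refine hlhs.unique ?_
    apply hSg.congr_of_eventuallyEq
    filter_upwards with s using (hE s)
  -- compute the deriv in the statement
  have hderiv : ∀ i, deriv (fun s => (γ s i) ^ ((β i - r) / β i) * g i s) t
      = (β i - r) / β i * γ t i ^ ((β i - r) / β i - 1) * deriv γ t i * g i t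
        + γ t i ^ ((β i - r) / β i) * deriv (g i) t := by
    intro i
    have h1 : HasDerivAt (fun s => (γ s i) ^ ((β i - r) / β i))
        ((β i - r) / β i * γ t i ^ ((β i - r) / β i - 1) * deriv γ t i) t := by
      have := (hγc i t).rpow_const (p := (β i - r) / β i) (Or.inl (hγpos t i).ne')
      convert this using 1
      ring
    exact (h1.mul ((hgdiff i) t).hasDerivAt).deriv
  have hrw : ∀ i, β i * (γ t i) ^ (r / β i) *
      deriv (fun s => (γ s i) ^ ((β i - r) / β i) * g i s) t
      = (β i - r) * deriv γ t i * g i t + β i * γ t i * deriv (g i) t := by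
    intro i
    rw [hderiv i]
    have hb := hβ i
    have hpos := hγpos t i
    have e1 : γ t i ^ (r / β i) * γ t i ^ ((β i - r) / β i - 1) = 1 := by
      rw [← Real.rpow_add hpos]
      have h : r / β i + ((β i - r) / β i - 1) = 0 := by field_simp; ring
      rw [h, Real.rpow_zero]
    have e2 : γ t i ^ (r / β i) * γ t i ^ ((β i - r) / β i) = γ t i := by
      rw [← Real.rpow_add hpos]
      have h : r / β i + (β i - r) / β i = 1 := by field_simp; ring
      rw [h, Real.rpow_one]
    have e3 : β i * ((β i - r) / β i) = β i - r := by field_simp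
    linear_combination (β i * ((β i - r) / β i) * deriv γ t i * g i t) * e1
      + (β i * deriv (g i) t) * e2 + (deriv γ t i * g i t) * e3
  have hsum : ∑ i, β i * (γ t i) ^ (r / β i) *
      deriv (fun s => (γ s i) ^ ((β i - r) / β i) * g i s) t
      = ∑ i, ((β i * deriv γ t i * g i t + β i * γ t i * deriv (g i) t)
          - r * (deriv γ t i * g i t)) :=
    Finset.sum_congr rfl fun i _ => by rw [hrw i]; ring
  rw [hsum, Finset.sum_sub_distrib, hkey, ← Finset.mul_sum, sub_self]
end

section
/- Let S be C² and quasi-homogeneous of degree r and type β on (0,∞)ⁿ with all βᵢ ≠ 0. Suppose along a differentiable curve q(t) all generalized intensive variables p̃ᵢ are constant except possibly p̃₁. Then p̃₁ is also constant along the curve (wherever q₁(t) > 0). -/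
open Real Finset

lemma clm_eq_sum {n : ℕ} (L : (Fin n → ℝ) →L[ℝ] ℝ) (w : Fin n → ℝ) :
    L w = ∑ i, w i * L (Pi.single i 1) := by
  have hw : w = ∑ i, w i • (Pi.single i 1 : Fin n → ℝ) := by
    funext j
    simp [Finset.sum_apply, Pi.single_apply]
  calc L w = L (∑ i, w i • (Pi.single i 1 : Fin n → ℝ)) := by rw [← hw]
    _ = ∑ i, w i * L (Pi.single i 1) := by rw [map_sum]; simp [smul_eq_mul]

lemma euler_qh {n : ℕ} (S : (Fin n → ℝ) → ℝ) (r : ℝ) (β : Fin n → ℝ)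
    (hS : ContDiff ℝ 2 S)
    (hqh : ∀ l : ℝ, 0 < l → ∀ q : Fin n → ℝ, (∀ i, 0 < q i) →
      S (fun j => l ^ β j * q j) = l ^ r * S q)
    (q : Fin n → ℝ) (hq : ∀ i, 0 < q i) :
    ∑ i, β i * q i * fderiv ℝ S q (Pi.single i 1) = r * S q := by
  have hmd : HasDerivAt (fun l : ℝ => (fun j => l ^ β j * q j : Fin n → ℝ))
      (fun j => β j * q j) 1 := by
    rw [hasDerivAt_pi]
    intro j
    have h1 : HasDerivAt (fun l : ℝ => l ^ β j) (β j * (1:ℝ) ^ (β j - 1)) 1 :=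
      Real.hasDerivAt_rpow_const (Or.inl one_ne_zero)
    simpa using h1.mul_const (q j)
  have hSd : HasFDerivAt S (fderiv ℝ S q) ((fun j => (1:ℝ) ^ β j * q j : Fin n → ℝ)) := by
    have : (fun j => (1:ℝ) ^ β j * q j : Fin n → ℝ) = q := by funext j; simp
    rw [this]
    exact ((hS.differentiable (by norm_num)) q).hasFDerivAt
  have hφ : HasDerivAt (fun l : ℝ => S (fun j => l ^ β j * q j))
      (fderiv ℝ S q (fun j => β j * q j)) 1 := by
    exact hSd.comp_hasDerivAt 1 hmd
  have hψ : HasDerivAt (fun l : ℝ => l ^ r * S q) (r * S q) 1 := by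
    simpa using (Real.hasDerivAt_rpow_const (p := r) (Or.inl one_ne_zero)).mul_const (S q)
  have heq : (fun l : ℝ => S (fun j => l ^ β j * q j)) =ᶠ[nhds 1]
      (fun l : ℝ => l ^ r * S q) := by
    filter_upwards [Ioi_mem_nhds one_pos] with l hl
    exact hqh l hl q hq
  have hφ' : HasDerivAt (fun l : ℝ => l ^ r * S q)
      (fderiv ℝ S q (fun j => β j * q j)) 1 := hφ.congr_of_eventuallyEq heq.symm
  have key := hφ'.unique hψ
  rw [clm_eq_sum] at key
  rw [← key]

/-- For `S` C² and quasi-homogeneous of degree `r` and type `β`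
(all `βᵢ ≠ 0`) on the positive orthant, with generalized intensive variables
`p̃ᵢ(q) = qᵢ^((βᵢ-r)/βᵢ) ∂S/∂qᵢ(q)`: if along a differentiable curve in the
positive orthant all `p̃ᵢ` with `i ≠ i₀` are constant, then `p̃_{i₀}` is also
constant along the curve. -/
theorem remaining_generalized_intensive_constant {n : ℕ} (S : (Fin n → ℝ) → ℝ)
    (r : ℝ) (β : Fin n → ℝ) (hβ : ∀ i, β i ≠ 0)
    (hS : ContDiff ℝ 2 S)
    (hqh : ∀ l : ℝ, 0 < l → ∀ q : Fin n → ℝ, (∀ i, 0 < q i) →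
      S (fun j => l ^ β j * q j) = l ^ r * S q)
    (γ : ℝ → Fin n → ℝ) (hγ : Differentiable ℝ γ)
    (hγpos : ∀ t, ∀ i, 0 < γ t i)
    (i₀ : Fin n)
    (hconst : ∀ i : Fin n, i ≠ i₀ → ∀ t : ℝ,
      deriv (fun s => (γ s i) ^ ((β i - r) / β i) *
        fderiv ℝ S (γ s) (Pi.single i 1)) t = 0) :
    ∀ t : ℝ,
      deriv (fun s => (γ s i₀) ^ ((β i₀ - r) / β i₀) *
        fderiv ℝ S (γ s) (Pi.single i₀ 1)) t = 0 := by
  intro t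
  -- notation
  set D : Fin n → ℝ → ℝ := fun i s => fderiv ℝ S (γ s) (Pi.single i 1) with hDdef
  -- differentiability of D i
  have hfd1 : Differentiable ℝ (fderiv ℝ S) :=
    (hS.fderiv_right (m := 1) (by norm_num)).differentiable one_ne_zero
  have hD : ∀ i, Differentiable ℝ (D i) := by
    intro i
    exact ((ContinuousLinearMap.apply ℝ ℝ (Pi.single i 1 : Fin n → ℝ)).differentiable.comp
      hfd1).comp hγ
  have hdD : ∀ i, HasDerivAt (D i) (deriv (D i) t) t := fun i => ((hD i) t).hasDerivAt
  set d : Fin n → ℝ := fun i => deriv (D i) t with hddef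
  -- coordinate derivatives of γ
  set v : Fin n → ℝ := deriv γ t with hvdef
  have hγt : HasDerivAt γ v t := (hγ t).hasDerivAt
  have hvi : ∀ i, HasDerivAt (fun s => γ s i) (v i) t := fun i => hasDerivAt_pi.1 hγt i
  -- Euler identity along the curve
  have hE : ∀ s : ℝ, ∑ i, β i * γ s i * D i s = r * S (γ s) := fun s =>
    euler_qh S r β hS hqh (γ s) (hγpos s)
  -- differentiate LHS of Euler along the curve
  have hL : HasDerivAt (fun s => ∑ i, β i * γ s i * D i s)
      (∑ i, (β i * (v i * D i t + γ t i * d i))) t := by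
    apply HasDerivAt.fun_sum
    intro i _
    have h1 : HasDerivAt (fun s => γ s i * D i s) (v i * D i t + γ t i * d i) t :=
      (hvi i).mul (hdD i)
    have h2 := h1.const_mul (β i)
    have h3 : (fun s => β i * (γ s i * D i s)) = (fun s => β i * γ s i * D i s) := by
      funext s; ring
    rwa [h3] at h2
  -- differentiate RHS of Euler along the curve
  have hSd : HasFDerivAt S (fderiv ℝ S (γ t)) (γ t) :=
    ((hS.differentiable (by norm_num)) (γ t)).hasFDerivAt
  have hR : HasDerivAt (fun s => r * S (γ s)) (r * fderiv ℝ S (γ t) v) t := by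
    have h1 : HasDerivAt (fun s => S (γ s)) (fderiv ℝ S (γ t) v) t := by
      exact hSd.comp_hasDerivAt t hγt
    exact h1.const_mul r
  have hR' : HasDerivAt (fun s => ∑ i, β i * γ s i * D i s)
      (r * fderiv ℝ S (γ t) v) t := by
    have hfun : (fun s => r * S (γ s)) = (fun s => ∑ i, β i * γ s i * D i s) := by
      funext s; rw [hE s]
    rw [← hfun]
    exact hR
  have star : ∑ i, (β i * (v i * D i t + γ t i * d i)) = r * ∑ i, v i * D i t := by
    have := hL.unique hR'
    rw [clm_eq_sum] at this
    rw [this]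
  -- the rearranged Gibbs-Duhem identity
  have gd : ∑ i, ((β i - r) * (v i * D i t) + β i * (γ t i * d i)) = 0 := by
    have : ∑ i, ((β i - r) * (v i * D i t) + β i * (γ t i * d i))
        = (∑ i, (β i * (v i * D i t + γ t i * d i))) - r * ∑ i, v i * D i t := by
      rw [Finset.mul_sum, ← Finset.sum_sub_distrib]
      exact Finset.sum_congr rfl fun i _ => by ring
    rw [this, star, sub_self]
  -- derivative of each intensive variable along the curve
  set e : Fin n → ℝ := fun i => (β i - r) / β i with hedef
  have hfderiv : ∀ i, deriv (fun s => (γ s i) ^ e i * D i s) t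
      = v i * e i * (γ t i) ^ (e i - 1) * D i t + (γ t i) ^ e i * d i := by
    intro i
    have h1 : HasDerivAt (fun s => (γ s i) ^ e i) (v i * e i * (γ t i) ^ (e i - 1)) t :=
      (hvi i).rpow_const (Or.inl (hγpos t i).ne')
    exact (h1.mul (hdD i)).deriv
  -- key algebraic identity per coordinate
  have halg : ∀ i, β i * (γ t i) ^ (r / β i) *
      (v i * e i * (γ t i) ^ (e i - 1) * D i t + (γ t i) ^ e i * d i)
      = (β i - r) * (v i * D i t) + β i * (γ t i * d i) := by
    intro i
    have hx : (0:ℝ) < γ t i := hγpos t i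
    have h1 : (γ t i) ^ (r / β i) * (γ t i) ^ (e i - 1) = 1 := by
      rw [← Real.rpow_add hx]
      have : r / β i + (e i - 1) = 0 := by
        rw [hedef]
        show r / β i + ((β i - r) / β i - 1) = 0
        have hb := hβ i
        field_simp
        try ring
      rw [this, Real.rpow_zero]
    have h2 : (γ t i) ^ (r / β i) * (γ t i) ^ e i = γ t i := by
      rw [← Real.rpow_add hx]
      have : r / β i + e i = 1 := by
        rw [hedef]
        show r / β i + (β i - r) / β i = 1
        rw [← add_div]
        have h : r + (β i - r) = β i := by ring
        rw [h, div_self (hβ i)]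
      rw [this, Real.rpow_one]
    have h3 : β i * e i = β i - r := by
      rw [hedef]
      show β i * ((β i - r) / β i) = β i - r
      rw [mul_div_assoc']
      exact mul_div_cancel_left₀ _ (hβ i)
    calc β i * (γ t i) ^ (r / β i) *
          (v i * e i * (γ t i) ^ (e i - 1) * D i t + (γ t i) ^ e i * d i)
        = (β i * e i) * v i * ((γ t i) ^ (r / β i) * (γ t i) ^ (e i - 1)) * D i t
          + β i * ((γ t i) ^ (r / β i) * (γ t i) ^ e i) * d i := by ring
      _ = (β i - r) * (v i * D i t) + β i * (γ t i * d i) := by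
          rw [h1, h2, h3]; ring
  -- sum of c_i * deriv f_i = 0
  have hsum : ∑ i, β i * (γ t i) ^ (r / β i) * deriv (fun s => (γ s i) ^ e i * D i s) t
      = 0 := by
    rw [← gd]
    exact Finset.sum_congr rfl fun i _ => by rw [hfderiv i, halg i]
  -- all terms except i₀ vanish
  have hsingle : ∑ i, β i * (γ t i) ^ (r / β i) * deriv (fun s => (γ s i) ^ e i * D i s) t
      = β i₀ * (γ t i₀) ^ (r / β i₀) * deriv (fun s => (γ s i₀) ^ e i₀ * D i₀ s) t := by
    apply Finset.sum_eq_single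
    · intro i _ hi
      rw [hconst i hi t, mul_zero]
    · intro h
      exact absurd (Finset.mem_univ i₀) h
  rw [hsingle] at hsum
  have hc : β i₀ * (γ t i₀) ^ (r / β i₀) ≠ 0 :=
    mul_ne_zero (hβ i₀) (Real.rpow_pos_of_pos (hγpos t i₀) _).ne'
  exact (mul_eq_zero.1 hsum).resolve_left hc
end

section
/- Let S be C² and quasi-homogeneous of degree r and type β on (0,∞)ⁿ, with pᵢ = ∂S/∂qᵢ. If along a differentiable curve q(t) all conjugate variables pᵢ are constant, then Σᵢ (βᵢ - r) pᵢ(q(t)) q̇ᵢ(t) = 0; in particular if additionally β₁ = ... = βₙ = β and r ≠ β, then Σᵢ pᵢ(q(t)) q̇ᵢ(t) = 0, i.e. dS/dt = 0 along the curve (no latent heat is possible under the standard zeroth law). -/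
/-- For `S` C² and quasi-homogeneous of degree `r` and type `β`
on the positive orthant with `pᵢ = ∂S/∂qᵢ`: if along a differentiable curve all
`pᵢ` are constant, then `Σᵢ (βᵢ - r) pᵢ(γ(t)) γ̇ᵢ(t) = 0`; in particular, if
all `βᵢ` are equal to some `b` and `r ≠ b`, then `Σᵢ pᵢ(γ(t)) γ̇ᵢ(t) = 0`,
i.e. `dS/dt = 0` along the curve (no latent heat under the standard zeroth
law). -/
theorem no_latent_heat_under_standard_zeroth_law {n : ℕ} (S : (Fin n → ℝ) → ℝ)
    (r : ℝ) (β : Fin n → ℝ)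
    (hS : ContDiff ℝ 2 S)
    (hqh : ∀ l : ℝ, 0 < l → ∀ q : Fin n → ℝ, (∀ i, 0 < q i) →
      S (fun j => l ^ β j * q j) = l ^ r * S q)
    (γ : ℝ → Fin n → ℝ) (hγ : Differentiable ℝ γ)
    (hγpos : ∀ t, ∀ i, 0 < γ t i)
    (hconst : ∀ i : Fin n, ∀ t : ℝ,
      deriv (fun s => fderiv ℝ S (γ s) (Pi.single i 1)) t = 0) :
    (∀ t : ℝ,
      ∑ i : Fin n,
        (β i - r) * fderiv ℝ S (γ t) (Pi.single i 1) * deriv (fun s => γ s i) t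
          = 0) ∧
    (∀ b : ℝ, (∀ i, β i = b) → r ≠ b → ∀ t : ℝ,
      (∑ i : Fin n,
        fderiv ℝ S (γ t) (Pi.single i 1) * deriv (fun s => γ s i) t) = 0 ∧
      deriv (fun s => S (γ s)) t = 0) := by
  classical
  have hSdiff : Differentiable ℝ S := hS.differentiable (by norm_num)
  set p : Fin n → (Fin n → ℝ) → ℝ := fun i x => fderiv ℝ S x (Pi.single i 1) with hpdef
  -- decomposition of the total differential
  have hsum : ∀ (x v : Fin n → ℝ), fderiv ℝ S x v = ∑ i, v i * p i x := by
    intro x v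
    have h := (fderiv ℝ S x : (Fin n → ℝ) →ₗ[ℝ] ℝ).pi_apply_eq_sum_univ v
    simp only [ContinuousLinearMap.coe_coe, smul_eq_mul] at h
    rw [h]
    refine Finset.sum_congr rfl fun i _ => ?_
    congr 1
    · congr 1
      ext j
      simp [Pi.single_apply, eq_comm]
  -- derivatives of the curve components
  have hγd : ∀ t, HasDerivAt γ (deriv γ t) t := fun t => (hγ t).hasDerivAt
  have hcomp : ∀ (i : Fin n) (t : ℝ),
      HasDerivAt (fun s => γ s i) (deriv γ t i) t := fun i t =>
    hasDerivAt_pi.mp (hγd t) i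
  have hderiv_comp : ∀ (i : Fin n) (t : ℝ),
      deriv (fun s => γ s i) t = deriv γ t i := fun i t => (hcomp i t).deriv
  -- chain rule along the curve
  have hchain : ∀ t, HasDerivAt (fun s => S (γ s))
      (∑ i, p i (γ t) * deriv (fun s => γ s i) t) t := by
    intro t
    have h := (hSdiff (γ t)).hasFDerivAt.comp_hasDerivAt t (hγd t)
    have : fderiv ℝ S (γ t) (deriv γ t)
        = ∑ i, p i (γ t) * deriv (fun s => γ s i) t := by
      rw [hsum]
      exact Finset.sum_congr rfl fun i _ => by rw [hderiv_comp, mul_comm]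
    rwa [this] at h
  -- differentiability of the conjugate variables along the curve
  have hpdiff : ∀ i : Fin n, Differentiable ℝ (fun s => p i (γ s)) := by
    intro i
    have h1 : ContDiff ℝ 1 (fderiv ℝ S) := hS.fderiv_right (le_refl 2)
    exact (h1.differentiable one_ne_zero).comp hγ |>.clm_apply (differentiable_const _)
  have hpzero : ∀ (i : Fin n) (t : ℝ), HasDerivAt (fun s => p i (γ s)) 0 t := by
    intro i t
    have := (hpdiff i t).hasDerivAt
    rwa [hconst i t] at this
  -- Euler identity from quasi-homogeneity
  have heuler : ∀ q : Fin n → ℝ, (∀ i, 0 < q i) →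
      ∑ i, β i * q i * p i q = r * S q := by
    intro q hq
    set φ : ℝ → Fin n → ℝ := fun l j => l ^ β j * q j with hφdef
    have hφd : HasDerivAt φ (fun j => β j * q j) 1 := by
      rw [hasDerivAt_pi]
      intro j
      have h := (Real.hasDerivAt_rpow_const (x := 1) (p := β j)
        (Or.inl one_ne_zero)).mul_const (q j)
      simpa [Real.one_rpow] using h
    have hφ1 : φ 1 = q := by
      ext j; simp [hφdef, Real.one_rpow]
    have h1 : HasDerivAt (fun l => S (φ l)) (fderiv ℝ S q (fun j => β j * q j)) 1 := by
      have := (hSdiff (φ 1)).hasFDerivAt.comp_hasDerivAt 1 hφd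
      rwa [hφ1] at this
    have h2 : HasDerivAt (fun l => S (φ l)) (r * S q) 1 := by
      have hev : (fun l : ℝ => l ^ r * S q) =ᶠ[nhds 1] (fun l => S (φ l)) := by
        filter_upwards [eventually_gt_nhds (show (0:ℝ) < 1 by norm_num)] with l hl
        exact (hqh l hl q hq).symm
      have hr : HasDerivAt (fun l : ℝ => l ^ r * S q) (r * S q) 1 := by
        have h := (Real.hasDerivAt_rpow_const (x := 1) (p := r)
          (Or.inl one_ne_zero)).mul_const (S q)
        simpa [Real.one_rpow] using h
      exact hr.congr_of_eventuallyEq hev.symm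
    have h3 := h1.unique h2
    rw [hsum] at h3
    rw [← h3]
  -- differentiate the Euler identity along the curve
  have key : ∀ t : ℝ, ∑ i, β i * (deriv (fun s => γ s i) t * p i (γ t))
      = r * ∑ i, p i (γ t) * deriv (fun s => γ s i) t := by
    intro t
    have hL : HasDerivAt (fun s => ∑ i, β i * (γ s i * p i (γ s)))
        (∑ i, β i * (deriv (fun s => γ s i) t * p i (γ t) + γ t i * 0)) t := by
      apply HasDerivAt.fun_sum
      intro i _
      have hterm : HasDerivAt (fun s => γ s i * p i (γ s))
          (deriv (fun s => γ s i) t * p i (γ t) + γ t i * 0) t := by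
        rw [hderiv_comp]
        exact (hcomp i t).mul (hpzero i t)
      exact hterm.const_mul (β i)
    have hR : HasDerivAt (fun s => r * S (γ s))
        (r * ∑ i, p i (γ t) * deriv (fun s => γ s i) t) t :=
      (hchain t).const_mul r
    have hfun : (fun s => ∑ i, β i * (γ s i * p i (γ s)))
        = fun s => r * S (γ s) := by
      funext s
      rw [← heuler (γ s) (hγpos s)]
      exact Finset.sum_congr rfl fun i _ => by ring
    rw [hfun] at hL
    have := hL.unique hR
    simpa using this
  constructor
  · intro t
    have h := key t
    have : ∑ i, (β i - r) * p i (γ t) * deriv (fun s => γ s i) t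
        = (∑ i, β i * (deriv (fun s => γ s i) t * p i (γ t)))
          - r * ∑ i, p i (γ t) * deriv (fun s => γ s i) t := by
      rw [Finset.mul_sum, ← Finset.sum_sub_distrib]
      exact Finset.sum_congr rfl fun i _ => by ring
    rw [this, h, sub_self]
  · intro b hb hrb t
    have h := key t
    have hsum0 : ∑ i, p i (γ t) * deriv (fun s => γ s i) t = 0 := by
      have h' : b * ∑ i, p i (γ t) * deriv (fun s => γ s i) t
          = r * ∑ i, p i (γ t) * deriv (fun s => γ s i) t := by
        rw [← h, Finset.mul_sum]
        exact Finset.sum_congr rfl fun i _ => by rw [hb i]; ring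
      have := sub_eq_zero.mpr h'
      rw [← sub_mul] at this
      rcases mul_eq_zero.mp this with h0 | h0
      · exact absurd (sub_eq_zero.mp h0).symm hrb
      · exact h0
    refine ⟨hsum0, ?_⟩
    rw [(hchain t).deriv, hsum0]
end
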